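/- Let g ≥ 3. The group Sp^{(2)}(2g) is generated by the square transvections T_a^2 about the primitive elements a = Σ_{i=1}^g (ε_i x_i + δ_i y_i), where each ε_i ∈ {0, 1} and each δ_i ∈ {0, 1} (and a ≠ 0; every such nonzero vector is primitive). -/

import Mathlib

namespace Paper

/-- `L g = ℤ^{2g}`, with basis indexed by `Fin g × Bool`:
`(i, false)` corresponds to `x_i` and `(i, true)` to `y_i`. -/
abbrev L (g : ℕ) := (Fin g × Bool) → ℤ

/-- The standard symplectic form on `ℤ^{2g}`. -/
def omg {g : ℕ} (a b : L g) : ℤ :=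
  ∑ i : Fin g, (a (i, false) * b (i, true) - a (i, true) * b (i, false))

lemma omg_add_right {g : ℕ} (a v w : L g) : omg a (v + w) = omg a v + omg a w := by
  simp only [omg, Pi.add_apply]
  rw [← Finset.sum_add_distrib]
  exact Finset.sum_congr rfl fun i _ => by ring

lemma omg_sub_right {g : ℕ} (a v w : L g) : omg a (v - w) = omg a v - omg a w := by
  simp only [omg, Pi.sub_apply]
  rw [← Finset.sum_sub_distrib]
  exact Finset.sum_congr rfl fun i _ => by ring

lemma omg_smul_right {g : ℕ} (a : L g) (c : ℤ) (v : L g) : omg a (c • v) = c * omg a v := by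
  simp only [omg, Pi.smul_apply, smul_eq_mul]
  rw [Finset.mul_sum]
  exact Finset.sum_congr rfl fun i _ => by ring

lemma omg_self {g : ℕ} (a : L g) : omg a a = 0 :=
  Finset.sum_eq_zero fun i _ => by ring

/-- A vector of `ℤ^{2g}` is primitive if it is not a nontrivial integer multiple. -/
def Primitive {g : ℕ} (a : L g) : Prop :=
  ¬ ∃ (n : ℤ) (b : L g), n ≠ 0 ∧ n ≠ 1 ∧ n ≠ -1 ∧ a = n • b

/-- The transvection `T_a : v ↦ v + (a,v)·a`, as a linear automorphism of `ℤ^{2g}`. -/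
def T {g : ℕ} (a : L g) : L g ≃ₗ[ℤ] L g where
  toFun v := v + omg a v • a
  invFun v := v - omg a v • a
  map_add' v w := by
    show (v + w) + omg a (v + w) • a = (v + omg a v • a) + (w + omg a w • a)
    rw [omg_add_right, add_smul]; abel
  map_smul' c v := by
    show (c • v) + omg a (c • v) • a = c • (v + omg a v • a)
    rw [omg_smul_right, mul_smul, smul_add]
  left_inv v := by
    show v + omg a v • a - omg a (v + omg a v • a) • a = v
    rw [omg_add_right, omg_smul_right, omg_self, mul_zero, add_zero]
    abel
  right_inv v := by
    show v - omg a v • a + omg a (v - omg a v • a) • a = v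
    rw [omg_sub_right, omg_smul_right, omg_self, mul_zero, sub_zero]
    abel

/-- `Sp(2g, ℤ)`: the group of linear automorphisms of `ℤ^{2g}` preserving
the symplectic form. -/
def Sp (g : ℕ) : Subgroup (L g ≃ₗ[ℤ] L g) where
  carrier := {φ | ∀ v w : L g, omg (φ v) (φ w) = omg v w}
  one_mem' := fun v w => rfl
  mul_mem' := by
    intro φ ψ hφ hψ v w
    exact (hφ (ψ v) (ψ w)).trans (hψ v w)
  inv_mem' := by
    intro φ hφ v w
    have h := hφ (φ⁻¹ v) (φ⁻¹ w)
    have h1 : φ (φ⁻¹ v) = v := φ.apply_symm_apply v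
    have h2 : φ (φ⁻¹ w) = w := φ.apply_symm_apply w
    rw [h1, h2] at h
    exact h.symm

/-- Reduction modulo 2, as a monoid homomorphism from the linear automorphism
group of `ℤ^{2g}` to matrices over `ℤ/2`. -/
def redHom (g : ℕ) :
    (L g ≃ₗ[ℤ] L g) →* Matrix (Fin g × Bool) (Fin g × Bool) (ZMod 2) where
  toFun φ := (LinearMap.toMatrix' (φ : L g →ₗ[ℤ] L g)).map (Int.castRingHom (ZMod 2))
  map_one' := by
    show (LinearMap.toMatrix' ((1 : L g ≃ₗ[ℤ] L g) : L g →ₗ[ℤ] L g)).map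
      (Int.castRingHom (ZMod 2)) = 1
    rw [LinearEquiv.coe_toLinearMap_one, LinearMap.toMatrix'_id,
      Matrix.map_one _ (map_zero _) (map_one _)]
  map_mul' φ ψ := by
    show (LinearMap.toMatrix' ((φ * ψ : L g ≃ₗ[ℤ] L g) : L g →ₗ[ℤ] L g)).map
        (Int.castRingHom (ZMod 2)) =
      (LinearMap.toMatrix' (φ : L g →ₗ[ℤ] L g)).map (Int.castRingHom (ZMod 2)) *
      (LinearMap.toMatrix' (ψ : L g →ₗ[ℤ] L g)).map (Int.castRingHom (ZMod 2))
    rw [LinearEquiv.coe_toLinearMap_mul, LinearMap.toMatrix'_mul, Matrix.map_mul]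

/-- `Sp^{(2)}(2g)`: the kernel of the reduction homomorphism
`Sp(2g, ℤ) → Sp(2g, ℤ/2)`, i.e. the symplectic automorphisms reducing to
the identity modulo 2. -/
def SpTwo (g : ℕ) : Subgroup (L g ≃ₗ[ℤ] L g) := Sp g ⊓ (redHom g).ker

-- ===== auxiliary development =====
section Aux
variable {g : ℕ}

lemma omg_add_left (a b v : L g) : omg (a + b) v = omg a v + omg b v := by
  simp only [omg, Pi.add_apply]
  rw [← Finset.sum_add_distrib]
  exact Finset.sum_congr rfl fun i _ => by ring

lemma omg_sub_left (a b v : L g) : omg (a - b) v = omg a v - omg b v := by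
  simp only [omg, Pi.sub_apply]
  rw [← Finset.sum_sub_distrib]
  exact Finset.sum_congr rfl fun i _ => by ring

lemma omg_smul_left (a : L g) (c : ℤ) (v : L g) : omg (c • a) v = c * omg a v := by
  simp only [omg, Pi.smul_apply, smul_eq_mul]
  rw [Finset.mul_sum]
  exact Finset.sum_congr rfl fun i _ => by ring

lemma omg_antisymm (a b : L g) : omg a b = - omg b a := by
  simp only [omg, ← Finset.sum_neg_distrib]
  exact Finset.sum_congr rfl fun i _ => by ring

@[simp] lemma T_apply (a v : L g) : T a v = v + omg a v • a := rfl

lemma T_mem_Sp (a : L g) : T a ∈ Sp g := by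
  intro v w
  simp only [T_apply]
  rw [omg_add_left, omg_add_right, omg_add_right, omg_smul_left, omg_smul_right,
    omg_smul_right, omg_smul_left, omg_self]
  rw [omg_antisymm a v]
  ring

/-- basis vector `x_i` -/
def xv (i : Fin g) : L g := fun p => if p = (i, false) then 1 else 0

/-- basis vector `y_i` -/
def yv (i : Fin g) : L g := fun p => if p = (i, true) then 1 else 0

lemma omg_xv (i : Fin g) (v : L g) : omg (xv i) v = v (i, true) := by
  simp only [omg, xv]
  rw [Finset.sum_eq_single i]
  · simp
  · intro b _ hb
    simp [Prod.ext_iff, hb]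
  · simp
lemma omg_yv (i : Fin g) (v : L g) : omg (yv i) v = -v (i, false) := by
  simp only [omg, yv]
  rw [Finset.sum_eq_single i]
  · simp
  · intro b _ hb
    simp [Prod.ext_iff, hb]
  · simp

@[simp] lemma xv_apply (i : Fin g) (p : Fin g × Bool) :
    xv i p = if p = (i, false) then 1 else 0 := rfl
@[simp] lemma yv_apply (i : Fin g) (p : Fin g × Bool) :
    yv i p = if p = (i, true) then 1 else 0 := rfl

lemma mul_apply' (f h : L g ≃ₗ[ℤ] L g) (v : L g) : (f * h) v = f (h v) := rfl

lemma T_pow_apply (a : L g) (n : ℕ) (v : L g) :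
    ((T a) ^ n) v = v + (n * omg a v) • a := by
  induction n with
  | zero => simp
  | succ n ih =>
    rw [pow_succ', mul_apply', T_apply, ih, omg_add_right, omg_smul_right, omg_self]
    push_cast [add_mul, add_smul, one_mul, mul_zero, add_zero, smul_smul]
    abel

lemma T_zpow_apply (a : L g) (n : ℤ) (v : L g) :
    ((T a) ^ n) v = v + (n * omg a v) • a := by
  obtain ⟨m, rfl | rfl⟩ := Int.eq_nat_or_neg n
  · rw [zpow_natCast, T_pow_apply]
  · have h : ((T a) ^ (m : ℤ)) (v + ((-(m:ℤ)) * omg a v) • a) = v := by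
      rw [zpow_natCast, T_pow_apply, omg_add_right, omg_smul_right, omg_self]
      push_cast [mul_zero, add_zero, neg_mul, neg_smul]
      abel
    have h2 := congrArg (fun w => ((T a) ^ (-(m:ℤ))) w) h
    rw [← h2, ← mul_apply', ← zpow_add]
    simp

lemma Tsq_zpow_apply (a : L g) (k : ℤ) (v : L g) :
    (((T a) ^ 2) ^ k) v = v + (2 * k * omg a v) • a := by
  have h : ((T a) ^ 2) ^ k = (T a) ^ (2 * k) := by
    rw [← zpow_natCast (T a) 2, ← zpow_mul]
    norm_num
  rw [h, T_zpow_apply]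

end Aux
section Gen
variable {g : ℕ}

/-- The generating set of square transvections about 0/1 vectors. -/
def genSet (g : ℕ) : Set (L g ≃ₗ[ℤ] L g) :=
  {φ : L g ≃ₗ[ℤ] L g | ∃ a : L g, (∀ p, a p = 0 ∨ a p = 1) ∧ a ≠ 0 ∧ φ = (T a) ^ 2}

/-- The subgroup generated by the square transvections about 0/1 vectors. -/
def HH (g : ℕ) : Subgroup (L g ≃ₗ[ℤ] L g) := Subgroup.closure (genSet g)

lemma Tsq_apply (a v : L g) : ((T a) ^ 2) v = v + (2 * omg a v) • a := by
  have h := T_pow_apply a 2 v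
  push_cast at h
  exact h

lemma coe_pow_apply (φ : L g ≃ₗ[ℤ] L g) (v : L g) :
    (φ : L g →ₗ[ℤ] L g) v = φ v := rfl

lemma Tsq_mem_ker (a : L g) : (T a) ^ 2 ∈ (redHom g).ker := by
  rw [MonoidHom.mem_ker]
  show (LinearMap.toMatrix' (((T a) ^ 2 : L g ≃ₗ[ℤ] L g) : L g →ₗ[ℤ] L g)).map
      (Int.castRingHom (ZMod 2)) = 1
  ext p q
  rw [Matrix.map_apply, LinearMap.toMatrix'_apply, coe_pow_apply, Tsq_apply]
  simp only [Pi.add_apply, Pi.smul_apply, smul_eq_mul, Matrix.one_apply, Int.coe_castRingHom]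
  push_cast
  have h2 : (2 : ZMod 2) = 0 := rfl
  rw [h2]
  simp [eq_comm, Pi.single_apply]

lemma Tsq_mem_SpTwo (a : L g) : (T a) ^ 2 ∈ SpTwo g := by
  rw [SpTwo, Subgroup.mem_inf]
  exact ⟨pow_mem (T_mem_Sp a) 2, Tsq_mem_ker a⟩

lemma HH_le_SpTwo : HH g ≤ SpTwo g := by
  rw [HH]
  apply (Subgroup.closure_le _).2
  rintro φ ⟨a, -, -, rfl⟩
  exact Tsq_mem_SpTwo a

lemma ker_parity {φ : L g ≃ₗ[ℤ] L g} (hφ : φ ∈ (redHom g).ker) (v : L g) (p : Fin g × Bool) :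
    (2 : ℤ) ∣ (φ v p - v p) := by
  rw [MonoidHom.mem_ker] at hφ
  have hφ' : (LinearMap.toMatrix' (φ : L g →ₗ[ℤ] L g)).map (Int.castRingHom (ZMod 2)) = 1 := hφ
  have hM : ∀ p q, ((LinearMap.toMatrix' (φ : L g →ₗ[ℤ] L g)) p q : ZMod 2)
      = if p = q then 1 else 0 := by
    intro p q
    have h := congrArg (fun M => M p q) hφ'
    simp only [Matrix.map_apply, Matrix.one_apply] at h
    exact h
  have hv : φ v = (LinearMap.toMatrix' (φ : L g →ₗ[ℤ] L g)).mulVec v := by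
    rw [← Matrix.toLin'_apply, Matrix.toLin'_toMatrix']
    rfl
  suffices h : ((φ v p - v p : ℤ) : ZMod 2) = 0 by
    have h2 := (ZMod.intCast_zmod_eq_zero_iff_dvd _ 2).1 h
    exact_mod_cast h2
  push_cast
  rw [hv]
  rw [Matrix.mulVec, dotProduct]
  push_cast
  rw [Finset.sum_congr rfl (fun q _ => by rw [hM p q])]
  simp [ite_mul, eq_comm]

lemma SpTwo_parity {φ : L g ≃ₗ[ℤ] L g} (hφ : φ ∈ SpTwo g) (v : L g) (p : Fin g × Bool) :
    (2 : ℤ) ∣ (φ v p - v p) :=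
  ker_parity ((Subgroup.mem_inf.1 hφ).2) v p

end Gen
section Conj
variable {g : ℕ}

lemma T_conj {ψ : L g ≃ₗ[ℤ] L g} (hψ : ψ ∈ Sp g) (a : L g) :
    ψ * T a * ψ⁻¹ = T (ψ a) := by
  apply LinearEquiv.ext
  intro v
  rw [mul_apply', mul_apply', T_apply, T_apply]
  rw [map_add, map_smul]
  have h1 : ψ (ψ⁻¹ v) = v := ψ.apply_symm_apply v
  have h2 : omg (ψ a) v = omg a (ψ⁻¹ v) := by
    conv_lhs => rw [← h1]
    exact hψ a (ψ⁻¹ v)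
  rw [h1, h2]

lemma Tsq_conj {ψ : L g ≃ₗ[ℤ] L g} (hψ : ψ ∈ Sp g) (a : L g) :
    (T (ψ a)) ^ 2 = ψ * (T a) ^ 2 * ψ⁻¹ := by
  rw [← T_conj hψ, pow_two, pow_two]
  group

/-- the sign flip on pair `j` -/
def Jp (j : Fin g) : L g ≃ₗ[ℤ] L g := T (yv j) ^ 2 * T (xv j + yv j) ^ 2 * T (xv j) ^ 2

lemma omg_xy (j : Fin g) (w : L g) : omg (xv j + yv j) w = w (j, true) - w (j, false) := by
  rw [omg_add_left, omg_xv, omg_yv]; ring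

lemma Jp_apply (j : Fin g) (v : L g) :
    Jp j v = fun p => if p.1 = j then -v p else v p := by
  rw [Jp, mul_apply', mul_apply']
  rw [Tsq_apply (xv j) v, omg_xv]
  set v1 := v + (2 * v (j, true)) • xv j with hv1
  have hc1 : omg (xv j + yv j) v1 = -v (j, false) - v (j, true) := by
    rw [omg_xy, hv1]
    simp [Prod.ext_iff]
    ring
  rw [Tsq_apply (xv j + yv j) v1, hc1]
  set v2 := v1 + (2 * (-v (j, false) - v (j, true))) • (xv j + yv j) with hv2
  have hc2 : omg (yv j) v2 = v (j, false) := by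
    rw [omg_yv, hv2, hv1]
    simp [Prod.ext_iff]
    ring
  rw [Tsq_apply (yv j) v2, hc2, hv2, hv1]
  funext p
  obtain ⟨l, b⟩ := p
  by_cases hl : l = j
  · subst hl
    cases b <;> simp [Prod.ext_iff] <;> ring
  · simp [Prod.ext_iff, hl]

lemma xv_ne_zero (i : Fin g) : xv i ≠ 0 := by
  intro h
  have := congrFun h (i, false)
  simp at this

lemma yv_ne_zero (i : Fin g) : yv i ≠ 0 := by
  intro h
  have := congrFun h (i, true)
  simp at this

lemma Jp_mem_HH (j : Fin g) : Jp j ∈ HH g := by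
  have h1 : (T (yv j)) ^ 2 ∈ HH g := Subgroup.subset_closure
    ⟨yv j, fun p => by by_cases h : p = (j, true) <;> simp [h], yv_ne_zero j, rfl⟩
  have h2 : (T (xv j + yv j)) ^ 2 ∈ HH g := Subgroup.subset_closure
    ⟨xv j + yv j, fun p => by
      by_cases h : p = (j, false) <;> by_cases h' : p = (j, true) <;>
        simp [h, h', Prod.ext_iff] at * <;> simp [h, h'],
      by intro h; have := congrFun h (j, false); simp [Prod.ext_iff] at this, rfl⟩
  have h3 : (T (xv j)) ^ 2 ∈ HH g := Subgroup.subset_closure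
    ⟨xv j, fun p => by by_cases h : p = (j, false) <;> simp [h], xv_ne_zero j, rfl⟩
  exact mul_mem (mul_mem h1 h2) h3

lemma Jp_mem_Sp (j : Fin g) : Jp j ∈ Sp g :=
  mul_mem (mul_mem (pow_mem (T_mem_Sp _) 2) (pow_mem (T_mem_Sp _) 2)) (pow_mem (T_mem_Sp _) 2)

/-- `Good b` : the square transvection about `b` lies in the subgroup. -/
def Good {g : ℕ} (b : L g) : Prop := (T b) ^ 2 ∈ HH g

lemma good_01 (b : L g) (h01 : ∀ p, b p = 0 ∨ b p = 1) (hne : b ≠ 0) : Good b :=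
  Subgroup.subset_closure ⟨b, h01, hne, rfl⟩

lemma good_flip (j : Fin g) (b : L g) (hb : Good b) :
    Good (fun p => if p.1 = j then -b p else b p) := by
  rw [← Jp_apply]
  rw [Good, Tsq_conj (Jp_mem_Sp j)]
  exact mul_mem (mul_mem (Jp_mem_HH j) hb) (inv_mem (Jp_mem_HH j))

lemma good_xv (i : Fin g) : Good (xv i) :=
  good_01 _ (fun p => by by_cases h : p = (i, false) <;> simp [h]) (xv_ne_zero i)

lemma good_yv (i : Fin g) : Good (yv i) :=
  good_01 _ (fun p => by by_cases h : p = (i, true) <;> simp [h]) (yv_ne_zero i)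

lemma good_add (i j : Fin g) (u w : L g) (hu : u = xv i ∨ u = yv i) (hw : w = xv j ∨ w = yv j)
    (hne : u ≠ w) : Good (u + w) := by
  have key : ∀ p, u p = 0 ∨ u p = 1 := by
    rcases hu with rfl | rfl
    · exact fun p => by by_cases h : p = (i, false) <;> simp [h]
    · exact fun p => by by_cases h : p = (i, true) <;> simp [h]
  have key' : ∀ p, w p = 0 ∨ w p = 1 := by
    rcases hw with rfl | rfl
    · exact fun p => by by_cases h : p = (j, false) <;> simp [h]
    · exact fun p => by by_cases h : p = (j, true) <;> simp [h]
  have hdisj : ∀ p, u p = 0 ∨ w p = 0 := by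
    intro p
    by_contra hcon
    push_neg at hcon
    obtain ⟨h1, h2⟩ := hcon
    -- u and w are indicator vectors of distinct points
    rcases hu with rfl | rfl <;> rcases hw with rfl | rfl <;>
      simp only [xv_apply, yv_apply, ite_eq_right_iff] at h1 h2 <;>
      [skip; skip; skip; skip] <;>
      first
        | (exact hne (by
            by_cases hp1 : p = (i, false) <;> by_cases hp2 : p = (j, false) <;>
              first
                | (subst hp1; subst hp2; rfl)
                | simp_all))
        | (exact hne (by
            by_cases hp1 : p = (i, false) <;> by_cases hp2 : p = (j, true) <;>
              first
                | (subst hp1; subst hp2; simp_all)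
                | simp_all))
        | (exact hne (by
            by_cases hp1 : p = (i, true) <;> by_cases hp2 : p = (j, false) <;>
              first
                | (subst hp1; subst hp2; simp_all)
                | simp_all))
        | (exact hne (by
            by_cases hp1 : p = (i, true) <;> by_cases hp2 : p = (j, true) <;>
              first
                | (subst hp1; subst hp2; rfl)
                | simp_all))
  apply good_01
  · intro p
    rcases key p with h | h <;> rcases key' p with h' | h' <;> rcases hdisj p with h'' | h'' <;>
      simp [Pi.add_apply, h, h', h''] at * <;> simp [h, h', h'']
  · intro hzero
    rcases hu with rfl | rfl
    · have := congrFun hzero (i, false)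
      rcases hdisj (i, false) with h | h <;> simp [Pi.add_apply, h] at this <;> simp_all
    · have := congrFun hzero (i, true)
      rcases hdisj (i, true) with h | h <;> simp [Pi.add_apply, h] at this <;> simp_all

end Conj
section Moves
variable {g : ℕ}

lemma xv_ne_xv {i j : Fin g} (h : i ≠ j) : xv i ≠ (xv j : L g) := by
  intro hc
  have := congrFun hc (i, false)
  simp [Prod.ext_iff, h] at this
lemma xv_ne_yv (i j : Fin g) : xv i ≠ (yv j : L g) := by
  intro hc
  have := congrFun hc (i, false)
  simp [Prod.ext_iff] at this
lemma yv_ne_yv {i j : Fin g} (h : i ≠ j) : yv i ≠ (yv j : L g) := by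
  intro hc
  have := congrFun hc (i, true)
  simp [Prod.ext_iff, h] at this

lemma good_xx {i j : Fin g} (h : i ≠ j) : Good (xv i + xv j) :=
  good_add i j _ _ (Or.inl rfl) (Or.inl rfl) (xv_ne_xv h)
lemma good_xy' (i j : Fin g) : Good (xv i + yv j) :=
  good_add i j _ _ (Or.inl rfl) (Or.inr rfl) (xv_ne_yv i j)
lemma good_yx (i j : Fin g) : Good (yv i + xv j) := by
  have := good_xy' j i
  rwa [add_comm] at this
lemma good_yy {i j : Fin g} (h : i ≠ j) : Good (yv i + yv j) :=
  good_add i j _ _ (Or.inr rfl) (Or.inr rfl) (yv_ne_yv h)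

lemma flip_add_xv {i j : Fin g} (h : i ≠ j) (u : L g) (hu : ∀ b, u (j, b) = 0) :
    (fun p => if p.1 = j then -(u + xv j) p else (u + xv j) p) = u - xv j := by
  funext p
  obtain ⟨l, b⟩ := p
  by_cases hl : l = j
  · subst hl
    simp [Prod.ext_iff, hu b]
  · simp [Prod.ext_iff, hl]

lemma flip_add_yv {i j : Fin g} (h : i ≠ j) (u : L g) (hu : ∀ b, u (j, b) = 0) :
    (fun p => if p.1 = j then -(u + yv j) p else (u + yv j) p) = u - yv j := by
  funext p
  obtain ⟨l, b⟩ := p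
  by_cases hl : l = j
  · subst hl
    simp [Prod.ext_iff, hu b]
  · simp [Prod.ext_iff, hl]

lemma good_xsubx {i j : Fin g} (h : i ≠ j) : Good (xv i - xv j) := by
  have hg := good_flip j _ (good_xx h)
  rwa [flip_add_xv h (xv i) (fun b => by simp [Prod.ext_iff, Ne.symm h])] at hg
lemma good_xsuby {i j : Fin g} (h : i ≠ j) : Good (xv i - yv j) := by
  have hg := good_flip j _ (good_xy' i j)
  rwa [flip_add_yv h (xv i) (fun b => by simp [Prod.ext_iff, Ne.symm h])] at hg

lemma omg_right_xv (v : L g) (j : Fin g) : omg v (xv j) = -v (j, true) := by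
  rw [omg_antisymm, omg_xv]
lemma omg_right_yv (v : L g) (j : Fin g) : omg v (yv j) = v (j, false) := by
  rw [omg_antisymm, omg_yv]; ring

/-- vectors fixed below level `i` -/
def Stab (g : ℕ) (i : ℕ) : Subgroup (L g ≃ₗ[ℤ] L g) where
  carrier := {ψ | ∀ j : Fin g, (j : ℕ) < i → ψ (xv j) = xv j ∧ ψ (yv j) = yv j}
  one_mem' := fun _ _ => ⟨rfl, rfl⟩
  mul_mem' := by
    intro a b ha hb j hj
    constructor
    · rw [mul_apply', (hb j hj).1, (ha j hj).1]
    · rw [mul_apply', (hb j hj).2, (ha j hj).2]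
  inv_mem' := by
    intro a ha j hj
    constructor
    · apply a.injective
      rw [(ha j hj).1]
      exact a.apply_symm_apply (xv j)
    · apply a.injective
      rw [(ha j hj).2]
      exact a.apply_symm_apply (yv j)

/-- reachability using the subgroup, fixing pairs below `i` -/
def Reach (g : ℕ) (i : ℕ) (v w : L g) : Prop :=
  ∃ ψ : L g ≃ₗ[ℤ] L g, ψ ∈ HH g ∧ ψ ∈ Stab g i ∧ ψ v = w

/-- reachability fixing additionally `x_i` -/
def ReachX (g : ℕ) (i : Fin g) (v w : L g) : Prop :=
  ∃ ψ : L g ≃ₗ[ℤ] L g, ψ ∈ HH g ∧ ψ ∈ Stab g i ∧ ψ (xv i) = xv i ∧ ψ v = w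

lemma reach_refl {i : ℕ} (v : L g) : Reach g i v v := ⟨1, one_mem _, one_mem _, rfl⟩

lemma reach_trans {i : ℕ} {u v w : L g} (h1 : Reach g i u v) (h2 : Reach g i v w) :
    Reach g i u w := by
  obtain ⟨ψ, h, hs, rfl⟩ := h1
  obtain ⟨ψ', h', hs', rfl⟩ := h2
  exact ⟨ψ' * ψ, mul_mem h' h, mul_mem hs' hs, rfl⟩

lemma reachX_refl {i : Fin g} (v : L g) : ReachX g i v v := ⟨1, one_mem _, one_mem _, rfl, rfl⟩

lemma reachX_trans {i : Fin g} {u v w : L g} (h1 : ReachX g i u v) (h2 : ReachX g i v w) :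
    ReachX g i u w := by
  obtain ⟨ψ, h, hs, hx, rfl⟩ := h1
  obtain ⟨ψ', h', hs', hx', rfl⟩ := h2
  exact ⟨ψ' * ψ, mul_mem h' h, mul_mem hs' hs, by rw [mul_apply', hx, hx'], rfl⟩

lemma reach_move {i : ℕ} (b : L g) (hb : Good b)
    (hsupp : ∀ j : Fin g, (j : ℕ) < i → b (j, false) = 0 ∧ b (j, true) = 0)
    (k : ℤ) (v : L g) : Reach g i v (v + (2 * k * omg b v) • b) := by
  refine ⟨((T b) ^ 2) ^ k, zpow_mem hb k, ?_, Tsq_zpow_apply b k v⟩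
  intro j hj
  constructor
  · rw [Tsq_zpow_apply, omg_right_xv, (hsupp j hj).2]
    simp
  · rw [Tsq_zpow_apply, omg_right_yv, (hsupp j hj).1]
    simp

lemma reachX_move {i : Fin g} (b : L g) (hb : Good b)
    (hsupp : ∀ j : Fin g, (j : ℕ) < (i : ℕ) → b (j, false) = 0 ∧ b (j, true) = 0)
    (hx : b (i, true) = 0)
    (k : ℤ) (v : L g) : ReachX g i v (v + (2 * k * omg b v) • b) := by
  refine ⟨((T b) ^ 2) ^ k, zpow_mem hb k, ?_, ?_, Tsq_zpow_apply b k v⟩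
  · intro j hj
    constructor
    · rw [Tsq_zpow_apply, omg_right_xv, (hsupp j hj).2]
      simp
    · rw [Tsq_zpow_apply, omg_right_yv, (hsupp j hj).1]
      simp
  · rw [Tsq_zpow_apply, omg_right_xv, hx]
    simp

lemma reach_parity {i : ℕ} {v w : L g} (h : Reach g i v w) (p : Fin g × Bool) :
    (2 : ℤ) ∣ (w p - v p) := by
  obtain ⟨ψ, hψ, -, rfl⟩ := h
  exact SpTwo_parity (HH_le_SpTwo hψ) v p

/-- no nonunit divides all coordinates -/
def UnitGcd (v : L g) : Prop := ∀ d : ℤ, (∀ p, d ∣ v p) → IsUnit d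

lemma reach_unitGcd {i : ℕ} {v w : L g} (h : Reach g i v w) (hv : UnitGcd v) : UnitGcd w := by
  obtain ⟨ψ, -, -, rfl⟩ := h
  intro d hd
  apply hv
  intro p
  have hw : (ψ v) = d • fun q => (ψ v) q / d := by
    funext q
    simp only [Pi.smul_apply, smul_eq_mul]
    exact (Int.mul_ediv_cancel' (hd q)).symm
  have hv2 : v = d • (ψ⁻¹ fun q => (ψ v) q / d) := by
    have := congrArg (fun u => ψ⁻¹ u) hw
    simp only [map_smul] at this
    rwa [show ψ⁻¹ (ψ v) = v from ψ.symm_apply_apply v] at this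
  rw [hv2]
  exact ⟨_, rfl⟩

/-- all coordinates on pairs below `i` vanish -/
def ZeroBelow (i : ℕ) (v : L g) : Prop := ∀ p : Fin g × Bool, ((p.1 : ℕ)) < i → v p = 0

lemma reach_zeroBelow {i : ℕ} {v w : L g} (h : Reach g i v w) (hv : ZeroBelow i v) :
    ZeroBelow i w := by
  obtain ⟨ψ, hψ, hst, rfl⟩ := h
  have hsp : ψ ∈ Sp g := (Subgroup.mem_inf.1 (HH_le_SpTwo hψ)).1
  rintro ⟨j, b⟩ hj
  cases b
  · have h1 : omg (ψ v) (yv j) = v (j, false) := by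
      conv_lhs => rw [← (hst j hj).2]
      rw [hsp v (yv j), omg_right_yv]
    rw [omg_right_yv] at h1
    rw [h1]
    exact hv (j, false) hj
  · have h1 : omg (ψ v) (xv j) = -v (j, true) := by
      conv_lhs => rw [← (hst j hj).1]
      rw [hsp v (xv j), omg_right_xv]
    rw [omg_right_xv] at h1
    have := neg_injective h1
    rw [this]
    exact hv (j, true) hj

lemma reachX_qi {i : Fin g} {v w : L g} (h : ReachX g i v w) : w (i, true) = v (i, true) := by
  obtain ⟨ψ, hψ, -, hx, rfl⟩ := h
  have hsp : ψ ∈ Sp g := (Subgroup.mem_inf.1 (HH_le_SpTwo hψ)).1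
  have h1 : omg (xv i) (ψ v) = v (i, true) := by
    conv_lhs => rw [← hx]
    rw [hsp (xv i) v, omg_xv]
  rwa [omg_xv] at h1

lemma reachX_to_reach {i : Fin g} {v w : L g} (h : ReachX g i v w) : Reach g (i : ℕ) v w := by
  obtain ⟨ψ, h1, h2, -, h4⟩ := h
  exact ⟨ψ, h1, h2, h4⟩

end Moves
section IntLemmas

lemma int_approx (a b : ℤ) (hb : b ≠ 0) : ∃ k : ℤ, (a + 2 * k * b).natAbs ≤ b.natAbs := by
  have habs : (0:ℤ) < |b| := abs_pos.2 hb
  set m := 2 * |b| with hm'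
  have hmpos : (0:ℤ) < m := by linarith
  have h1 : 0 ≤ a % m := Int.emod_nonneg a (ne_of_gt hmpos)
  have h2 : a % m < m := Int.emod_lt_of_pos a hmpos
  have heq : m * (a / m) + a % m = a := Int.mul_ediv_add_emod a m
  set s : ℤ := if 0 ≤ b then 1 else -1 with hs'
  have hs : 2 * s * b = m := by
    by_cases h : 0 ≤ b
    · simp only [hs', if_pos h, hm', abs_of_nonneg h]; ring
    · simp only [hs', if_neg h, hm', abs_of_neg (lt_of_not_ge h)]; ring
  have habsn : |b| = (b.natAbs : ℤ) := Int.abs_eq_natAbs b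
  by_cases hr : a % m ≤ |b|
  · refine ⟨-(a / m) * s, ?_⟩
    have key : a + 2 * (-(a / m) * s) * b = a % m := by linear_combination (-(a / m)) * hs - heq
    rw [key]
    omega
  · refine ⟨-(a / m) * s - s, ?_⟩
    have key : a + 2 * (-(a / m) * s - s) * b = a % m - m := by
      linear_combination (-(a / m) - 1) * hs - heq
    rw [key]
    omega

lemma int_approx_odd (a b : ℤ) (hb : b ≠ 0) (ha : Odd a) (hbe : Even b) :
    ∃ k : ℤ, (a + 2 * k * b).natAbs < b.natAbs ∧ Odd (a + 2 * k * b) := by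
  obtain ⟨k, hk⟩ := int_approx a b hb
  have hodd : Odd (a + 2 * k * b) := by
    rcases ha with ⟨t, ht⟩
    exact ⟨t + k * b, by linarith⟩
  refine ⟨k, ?_, hodd⟩
  rcases lt_or_eq_of_le hk with h | h
  · exact h
  · exfalso
    rcases Int.natAbs_eq_natAbs_iff.1 h with h' | h'
    · rcases hbe with ⟨t, ht⟩
      rcases hodd with ⟨u, hu⟩
      omega
    · rcases hbe with ⟨t, ht⟩
      rcases hodd with ⟨u, hu⟩
      omega

lemma int_approx_ndvd (a b : ℤ) (hb : b ≠ 0) (hnd : ¬ b ∣ a) :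
    ∃ k : ℤ, 0 < (a + 2 * k * b).natAbs ∧ (a + 2 * k * b).natAbs < b.natAbs := by
  obtain ⟨k, hk⟩ := int_approx a b hb
  have hnd2 : ¬ b ∣ (a + 2 * k * b) := by
    intro hdvd
    apply hnd
    have h2 : b ∣ 2 * k * b := Dvd.intro_left _ rfl
    have h3 := dvd_sub hdvd h2
    simpa using h3
  have hne : a + 2 * k * b ≠ 0 := by rintro h; exact hnd2 (h ▸ dvd_zero b)
  refine ⟨k, by omega, ?_⟩
  rcases lt_or_eq_of_le hk with h | h
  · exact h
  · exfalso
    rcases Int.natAbs_eq_natAbs_iff.1 h with h' | h'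
    · exact hnd2 (by rw [h'])
    · exact hnd2 (by rw [h']; exact dvd_neg.2 (dvd_refl b))
end IntLemmas
section Phase0
variable {g : ℕ}

lemma add_smul_apply (v b : L g) (c : ℤ) (p : Fin g × Bool) :
    (v + c • b) p = v p + c * b p := by
  simp [smul_eq_mul]

lemma xv_zero_ne (i : Fin g) (p : Fin g × Bool) (h : p.1 ≠ i) : xv i p = 0 := by
  obtain ⟨l, b⟩ := p
  simp only [xv_apply, Prod.ext_iff]
  simp_all
lemma yv_zero_ne (i : Fin g) (p : Fin g × Bool) (h : p.1 ≠ i) : yv i p = 0 := by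
  obtain ⟨l, b⟩ := p
  simp only [yv_apply, Prod.ext_iff]
  simp_all

lemma coord_add (u w : L g) (p : Fin g × Bool) : (u + w) p = u p + w p := rfl
lemma coord_sub (u w : L g) (p : Fin g × Bool) : (u - w) p = u p - w p := rfl

lemma xv_at_true (i j : Fin g) : (xv i : L g) (j, true) = 0 := by simp
lemma yv_at_false (i j : Fin g) : (yv i : L g) (j, false) = 0 := by simp

lemma xv_self (i : Fin g) : (xv i : L g) (i, false) = 1 := by simp
lemma yv_self (i : Fin g) : (yv i : L g) (i, true) = 1 := by simp

lemma supp_at (i : Fin g) (b : L g) (hb : ∀ p : Fin g × Bool, p.1 ≠ i → b p = 0) :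
    ∀ j : Fin g, (j : ℕ) < (i : ℕ) → b (j, false) = 0 ∧ b (j, true) = 0 := by
  intro j hj
  have hne : (j : Fin g) ≠ i := by
    intro h; subst h; omega
  exact ⟨hb _ hne, hb _ hne⟩

lemma supp_at2 (i j' : Fin g) (hj' : (i : ℕ) ≤ (j' : ℕ)) (b : L g)
    (hb : ∀ p : Fin g × Bool, p.1 ≠ i → p.1 ≠ j' → b p = 0) :
    ∀ j : Fin g, (j : ℕ) < (i : ℕ) → b (j, false) = 0 ∧ b (j, true) = 0 := by
  intro j hj
  have hne : (j : Fin g) ≠ i := by intro h; subst h; omega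
  have hne' : (j : Fin g) ≠ j' := by intro h; subst h; omega
  exact ⟨hb _ hne hne', hb _ hne hne'⟩

lemma odd_ne_zero {a : ℤ} (h : Odd a) : a ≠ 0 := by
  rcases h with ⟨t, ht⟩; omega

lemma phase0 (i : Fin g) : ∀ (n : ℕ) (v : L g), (v (i, true)).natAbs ≤ n →
    Odd (v (i, false)) → Even (v (i, true)) →
    ∃ v', Reach g (i : ℕ) v v' ∧ v' (i, true) = 0 ∧ Odd (v' (i, false)) ∧
      v' (i, false) ∣ v (i, false) ∧ v' (i, false) ∣ v (i, true) ∧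
      ∀ p : Fin g × Bool, p.1 ≠ i → v' p = v p := by
  intro n
  induction n with
  | zero =>
    intro v hn hodd _
    have hq : v (i, true) = 0 := by omega
    exact ⟨v, reach_refl v, hq, hodd, dvd_refl _, hq ▸ dvd_zero _, fun p _ => rfl⟩
  | succ n ih =>
    intro v hn hodd heven
    by_cases hq : v (i, true) = 0
    · exact ⟨v, reach_refl v, hq, hodd, dvd_refl _, hq ▸ dvd_zero _, fun p _ => rfl⟩
    · obtain ⟨k, hklt, hkodd⟩ := int_approx_odd (v (i, false)) (v (i, true)) hq hodd heven
      have hm1 := reach_move (i := (i : ℕ)) (xv i) (good_xv i)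
        (supp_at i _ (xv_zero_ne i)) k v
      set v1 := v + (2 * k * omg (xv i) v) • xv i with hv1
      have c1 : v1 (i, false) = v (i, false) + 2 * k * v (i, true) := by
        rw [hv1, add_smul_apply, omg_xv]
        simp
      have c2 : v1 (i, true) = v (i, true) := by
        rw [hv1, add_smul_apply, omg_xv]
        simp [Prod.ext_iff]
      have c3 : ∀ p : Fin g × Bool, p.1 ≠ i → v1 p = v p := by
        intro p hp
        rw [hv1, add_smul_apply, xv_zero_ne i p hp, mul_zero, add_zero]
      set P := v1 (i, false) with hP'
      have hPodd : Odd P := by rw [c1]; exact hkodd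
      have hPlt : P.natAbs < (v (i, true)).natAbs := by rw [c1]; exact hklt
      have hPne : P ≠ 0 := odd_ne_zero hPodd
      obtain ⟨k2, hk2⟩ := int_approx (v (i, true)) (-P) (neg_ne_zero.2 hPne)
      have hm2 := reach_move (i := (i : ℕ)) (yv i) (good_yv i)
        (supp_at i _ (yv_zero_ne i)) k2 v1
      set v2 := v1 + (2 * k2 * omg (yv i) v1) • yv i with hv2
      have hco : omg (yv i) v1 = -P := by rw [omg_yv, hP']
      have d1 : v2 (i, false) = P := by
        rw [hv2, add_smul_apply]
        simp [Prod.ext_iff, hP']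
      have d2 : v2 (i, true) = v (i, true) + 2 * k2 * (-P) := by
        rw [hv2, add_smul_apply, hco, c2]
        simp
      have d3 : ∀ p : Fin g × Bool, p.1 ≠ i → v2 p = v p := by
        intro p hp
        rw [hv2, add_smul_apply, yv_zero_ne i p hp, mul_zero, add_zero, c3 p hp]
      have hnat : (v2 (i, true)).natAbs ≤ n := by
        rw [d2]
        have := hk2
        rw [Int.natAbs_neg] at this
        omega
      have hodd2 : Odd (v2 (i, false)) := by rw [d1]; exact hPodd
      have heven2 : Even (v2 (i, true)) := by
        rcases heven with ⟨t, ht⟩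
        exact ⟨t - k2 * P, by rw [d2]; linarith⟩
      obtain ⟨v3, hre3, hq3, hodd3, hdv1, hdv2, hun3⟩ := ih v2 hnat hodd2 heven2
      rw [d1] at hdv1
      rw [d2] at hdv2
      refine ⟨v3, reach_trans (reach_trans hm1 hm2) hre3, hq3, hodd3, ?_, ?_, ?_⟩
      · -- divides v (i,false)
        have hdq : v3 (i, false) ∣ v (i, true) := by
          have e1 : v (i, true) = (v (i, true) + 2 * k2 * (-P)) + 2 * k2 * P := by ring
          rw [e1]
          exact dvd_add hdv2 (Dvd.dvd.mul_left hdv1 _)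
        have e2 : v (i, false) = P - 2 * k * v (i, true) := by
          rw [c1]; ring
        rw [e2]
        exact dvd_sub hdv1 (Dvd.dvd.mul_left hdq _)
      · have e1 : v (i, true) = (v (i, true) + 2 * k2 * (-P)) + 2 * k2 * P := by ring
        rw [e1]
        exact dvd_add hdv2 (Dvd.dvd.mul_left hdv1 _)
      · intro p hp
        rw [hun3 p hp, d3 p hp]

end Phase0
section Phase1
variable {g : ℕ}

lemma even_away_transfer {i : ℕ} {v w : L g} (hRe : Reach g i v w) {j : Fin g}
    (hEven : ∀ p : Fin g × Bool, p.1 ≠ j → Even (v p)) :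
    ∀ p : Fin g × Bool, p.1 ≠ j → Even (w p) := by
  intro p hp
  obtain ⟨t, ht⟩ := hEven p hp
  obtain ⟨c, hc⟩ := reach_parity hRe p
  exact ⟨t + c, by omega⟩

lemma phase1 (i : Fin g) : ∀ (n : ℕ) (v : L g), (v (i, false)).natAbs ≤ n →
    Odd (v (i, false)) → v (i, true) = 0 →
    (∀ p : Fin g × Bool, p.1 ≠ i → Even (v p)) →
    ZeroBelow (i : ℕ) v → UnitGcd v →
    ∃ v', Reach g (i : ℕ) v v' ∧ (v' (i, false) = 1 ∨ v' (i, false) = -1) ∧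
      v' (i, true) = 0 := by
  intro n
  induction n with
  | zero =>
    intro v hn hodd _ _ _ _
    exfalso
    rcases hodd with ⟨t, ht⟩
    omega
  | succ n ih =>
    intro v hn hodd hq heven hzb hgcd
    by_cases h1 : (v (i, false)).natAbs = 1
    · refine ⟨v, reach_refl v, ?_, hq⟩
      rcases Int.natAbs_eq (v (i, false)) with h | h <;> rw [h1] at h <;> omega
    · -- find a coordinate not divisible by p1
      have hp1ne : v (i, false) ≠ 0 := odd_ne_zero hodd
      have hbig : 2 ≤ (v (i, false)).natAbs := by omega
      have hex : ∃ p : Fin g × Bool, p.1 ≠ i ∧ ¬ (v (i, false) ∣ v p) := by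
        by_contra hno
        push_neg at hno
        have hunit : IsUnit (v (i, false)) := by
          apply hgcd
          intro p
          by_cases hp : p.1 = i
          · obtain ⟨l, b⟩ := p
            simp only at hp
            subst hp
            cases b
            · exact dvd_refl _
            · rw [hq]; exact dvd_zero _
          · exact hno p hp
        rw [Int.isUnit_iff] at hunit
        rcases hunit with h | h <;> rw [h] at h1 <;> simp at h1
      obtain ⟨⟨jj, bb⟩, hjne, hndvd⟩ := hex
      simp only at hjne
      have hjge : (i : ℕ) ≤ (jj : ℕ) := by
        by_contra hlt
        exact hndvd (by
          rw [hzb (jj, bb) (show ((jj : ℕ)) < (i : ℕ) by omega)]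
          exact dvd_zero _)
      have hij : i ≠ jj := Ne.symm hjne
      obtain ⟨k, hrpos, hrlt⟩ := int_approx_ndvd (v (jj, bb)) (v (i, false)) hp1ne hndvd
      set r := v (jj, bb) + 2 * k * v (i, false) with hr'
      have hreven : Even r := by
        obtain ⟨t, ht⟩ := heven (jj, bb) hjne
        refine ⟨t + k * v (i, false), ?_⟩
        rw [hr']
        linear_combination ht
      have hrne : r ≠ 0 := by omega
      -- Perform the two moves (depending on bb) that change v (jj,bb) to r,
      -- leaving (i,false) and (jj, !bb) unchanged, damaging only (i,true).
      have key : ∃ v2, Reach g (i : ℕ) v v2 ∧ v2 (i, false) = v (i, false) ∧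
          v2 (jj, bb) = r ∧ Even (v2 (i, true)) := by
        cases bb
        · -- pj case : b₁ = yv i + xv jj, b₂ = xv jj
          have hm1 := reach_move (i := (i : ℕ)) (yv i + xv jj) (good_yx i jj)
            (supp_at2 i jj hjge _ (by
              intro p hp1 hp2
              rw [coord_add, yv_zero_ne i p hp1, xv_zero_ne jj p hp2]
              ring))
            (-k) v
          set v1 := v + (2 * (-k) * omg (yv i + xv jj) v) • (yv i + xv jj) with hv1
          have hco1 : omg (yv i + xv jj) v = v (jj, true) - v (i, false) := by
            rw [omg_add_left, omg_yv, omg_xv]; ring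
          have e1 : v1 (jj, false) = v (jj, false) + 2 * (-k) * (v (jj, true) - v (i, false)) := by
            rw [hv1, add_smul_apply, hco1, coord_add]
            simp [Prod.ext_iff, Ne.symm hij]
          have e2 : v1 (jj, true) = v (jj, true) := by
            rw [hv1, add_smul_apply, coord_add]
            simp [Prod.ext_iff, Ne.symm hij]
          have e3 : v1 (i, false) = v (i, false) := by
            rw [hv1, add_smul_apply, coord_add]
            simp [Prod.ext_iff, hij]
          have e4 : v1 (i, true) = 2 * (-k) * (v (jj, true) - v (i, false)) := by
            rw [hv1, add_smul_apply, hco1, coord_add, hq]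
            simp [Prod.ext_iff, hij]
          have hm2 := reach_move (i := (i : ℕ)) (xv jj) (good_xv jj)
            (supp_at2 i jj hjge _ (by intro p _ hp2; exact xv_zero_ne jj p hp2)) k v1
          set v2 := v1 + (2 * k * omg (xv jj) v1) • xv jj with hv2
          have hco2 : omg (xv jj) v1 = v (jj, true) := by rw [omg_xv, e2]
          refine ⟨v2, reach_trans hm1 hm2, ?_, ?_, ?_⟩
          · rw [hv2, add_smul_apply, e3]
            simp [Prod.ext_iff, hij]
          · rw [hv2, add_smul_apply, hco2, e1, xv_self, hr']
            ring
          · rw [hv2, add_smul_apply, e4]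
            simp only [xv_zero_ne jj (i, true) hij, mul_zero, add_zero]
            exact ⟨-k * (v (jj, true) - v (i, false)), by ring⟩
        · -- qj case : b₁ = yv i + yv jj, b₂ = yv jj
          have hm1 := reach_move (i := (i : ℕ)) (yv i + yv jj) (good_yy hij)
            (supp_at2 i jj hjge _ (by
              intro p hp1 hp2
              rw [coord_add, yv_zero_ne i p hp1, yv_zero_ne jj p hp2]
              ring))
            (-k) v
          set v1 := v + (2 * (-k) * omg (yv i + yv jj) v) • (yv i + yv jj) with hv1
          have hco1 : omg (yv i + yv jj) v = -v (i, false) - v (jj, false) := by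
            rw [omg_add_left, omg_yv, omg_yv]; ring
          have e1 : v1 (jj, true) = v (jj, true) + 2 * (-k) * (-v (i, false) - v (jj, false)) := by
            rw [hv1, add_smul_apply, hco1, coord_add]
            simp [Prod.ext_iff, Ne.symm hij]
          have e2 : v1 (jj, false) = v (jj, false) := by
            rw [hv1, add_smul_apply, coord_add]
            simp [Prod.ext_iff, Ne.symm hij]
          have e3 : v1 (i, false) = v (i, false) := by
            rw [hv1, add_smul_apply, coord_add]
            simp [Prod.ext_iff, hij]
          have e4 : v1 (i, true) = 2 * (-k) * (-v (i, false) - v (jj, false)) := by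
            rw [hv1, add_smul_apply, hco1, coord_add, hq]
            simp [Prod.ext_iff, hij]
          have hm2 := reach_move (i := (i : ℕ)) (yv jj) (good_yv jj)
            (supp_at2 i jj hjge _ (by intro p _ hp2; exact yv_zero_ne jj p hp2)) k v1
          set v2 := v1 + (2 * k * omg (yv jj) v1) • yv jj with hv2
          have hco2 : omg (yv jj) v1 = -v (jj, false) := by rw [omg_yv, e2]
          refine ⟨v2, reach_trans hm1 hm2, ?_, ?_, ?_⟩
          · rw [hv2, add_smul_apply, e3]
            simp [Prod.ext_iff, hij]
          · rw [hv2, add_smul_apply, hco2, e1, yv_self, hr']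
            ring
          · rw [hv2, add_smul_apply, e4]
            simp only [yv_zero_ne jj (i, true) hij, mul_zero, add_zero]
            exact ⟨-k * (-v (i, false) - v (jj, false)), by ring⟩
      obtain ⟨v2, hRe2, f1, f2, f4⟩ := key
      -- rerun phase0 on pair i
      obtain ⟨v3, hRe3, g1, g2, g3, -, g5⟩ :=
        phase0 i (v2 (i, true)).natAbs v2 le_rfl (by rw [f1]; exact hodd) f4
      rw [f1] at g3
      have hRe23 : Reach g (i : ℕ) v v3 := reach_trans hRe2 hRe3
      have hv3r : v3 (jj, bb) = r := by rw [g5 (jj, bb) hjne, f2]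
      -- invariants for recursion
      have heven3 : ∀ p : Fin g × Bool, p.1 ≠ i → Even (v3 p) := even_away_transfer hRe23 heven
      have hzb3 : ZeroBelow (i : ℕ) v3 := reach_zeroBelow hRe23 hzb
      have hgcd3 : UnitGcd v3 := reach_unitGcd hRe23 hgcd
      by_cases hcase : (v3 (i, false)).natAbs < (v (i, false)).natAbs
      · obtain ⟨v', hRe', hcon, hq'⟩ := ih v3
          (Nat.lt_succ_iff.1 (lt_of_lt_of_le hcase hn)) g2 g1 heven3 hzb3 hgcd3
        exact ⟨v', reach_trans hRe23 hRe', hcon, hq'⟩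
      · -- |v3 (i,false)| = |v (i,false)|; use the small residue r to shrink it
        have hle : (v3 (i, false)).natAbs ≤ (v (i, false)).natAbs :=
          Nat.le_of_dvd (by omega) (Int.natAbs_dvd_natAbs.2 g3)
        obtain ⟨k3, hk3⟩ := int_approx (v3 (i, false)) r hrne
        have key2 : ∃ v4, Reach g (i : ℕ) v3 v4 ∧
            v4 (i, false) = v3 (i, false) + 2 * k3 * r ∧ v4 (i, true) = 0 := by
          cases bb
          · -- use b = xv i - yv jj (coeff = v3 (i,true) + v3 (jj,false) = r)
            have hm := reach_move (i := (i : ℕ)) (xv i - yv jj) (good_xsuby hij)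
              (supp_at2 i jj hjge _ (by
                intro p hp1 hp2
                rw [coord_sub, xv_zero_ne i p hp1, yv_zero_ne jj p hp2, sub_zero]))
              k3 v3
            set v4 := v3 + (2 * k3 * omg (xv i - yv jj) v3) • (xv i - yv jj) with hv4
            have hco : omg (xv i - yv jj) v3 = r := by
              rw [omg_sub_left, omg_xv, omg_yv, g1, hv3r]
              ring
            refine ⟨v4, hm, ?_, ?_⟩
            · rw [hv4, add_smul_apply, hco, coord_sub]
              simp [Prod.ext_iff, hij]
            · rw [hv4, add_smul_apply, coord_sub, g1]
              simp [Prod.ext_iff, hij, Ne.symm hij]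
          · -- use b = xv i + xv jj (coeff = v3 (i,true) + v3 (jj,true) = r)
            have hm := reach_move (i := (i : ℕ)) (xv i + xv jj) (good_xx hij)
              (supp_at2 i jj hjge _ (by
                intro p hp1 hp2
                rw [coord_add, xv_zero_ne i p hp1, xv_zero_ne jj p hp2, add_zero]))
              k3 v3
            set v4 := v3 + (2 * k3 * omg (xv i + xv jj) v3) • (xv i + xv jj) with hv4
            have hco : omg (xv i + xv jj) v3 = r := by
              rw [omg_add_left, omg_xv, omg_xv, g1, hv3r]
              ring
            refine ⟨v4, hm, ?_, ?_⟩
            · rw [hv4, add_smul_apply, hco, coord_add]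
              simp [Prod.ext_iff, hij]
            · rw [hv4, add_smul_apply, coord_add, g1]
              simp [Prod.ext_iff, hij, Ne.symm hij]
        obtain ⟨v4, hRe4, m1, m2⟩ := key2
        have hRe24 : Reach g (i : ℕ) v v4 := reach_trans hRe23 hRe4
        have hodd4 : Odd (v4 (i, false)) := by
          rw [m1]
          obtain ⟨t, ht⟩ := g2
          refine ⟨t + k3 * r, ?_⟩
          rw [ht]
          ring
        have hn4 : (v4 (i, false)).natAbs ≤ n := by
          rw [m1]
          exact Nat.lt_succ_iff.1 (lt_of_lt_of_le (lt_of_le_of_lt hk3 hrlt) hn)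
        obtain ⟨v', hRe', hcon, hq'⟩ := ih v4 hn4 hodd4 m2
          (even_away_transfer hRe24 heven) (reach_zeroBelow hRe24 hzb)
          (reach_unitGcd hRe24 hgcd)
        exact ⟨v', reach_trans hRe24 hRe', hcon, hq'⟩

end Phase1
section Phase23
variable {g : ℕ}

lemma Jp_stab (i : Fin g) : Jp i ∈ Stab g (i : ℕ) := by
  intro l hl
  have hne : l ≠ i := by intro h; subst h; omega
  constructor
  · rw [Jp_apply]
    funext p
    by_cases hp : p.1 = i
    · rw [if_pos hp, xv_zero_ne l p (by rw [hp]; exact Ne.symm hne), neg_zero]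
    · rw [if_neg hp]
  · rw [Jp_apply]
    funext p
    by_cases hp : p.1 = i
    · rw [if_pos hp, yv_zero_ne l p (by rw [hp]; exact Ne.symm hne), neg_zero]
    · rw [if_neg hp]

lemma unit_sq {s : ℤ} (hs : s = 1 ∨ s = -1) : s * s = 1 := by rcases hs with h | h <;> rw [h] <;> ring

lemma phase23 (i : Fin g) : ∀ (n : ℕ) (v : L g),
    (Finset.univ.filter (fun j : Fin g => j ≠ i ∧ (v (j, false) ≠ 0 ∨ v (j, true) ≠ 0))).card ≤ n →
    (v (i, false) = 1 ∨ v (i, false) = -1) → v (i, true) = 0 →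
    (∀ p : Fin g × Bool, p.1 ≠ i → Even (v p)) → ZeroBelow (i : ℕ) v →
    Reach g (i : ℕ) v (xv i) := by
  intro n
  induction n with
  | zero =>
    intro v hcard hunit hq heven hzb
    have hempty : ∀ j : Fin g, j ≠ i → v (j, false) = 0 ∧ v (j, true) = 0 := by
      intro j hj
      by_contra hcon
      have hmem : j ∈ Finset.univ.filter
          (fun j : Fin g => j ≠ i ∧ (v (j, false) ≠ 0 ∨ v (j, true) ≠ 0)) := by
        simp only [Finset.mem_filter, Finset.mem_univ, true_and]
        exact ⟨hj, by tauto⟩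
      have := Finset.card_pos.2 ⟨j, hmem⟩
      omega
    rcases hunit with hs | hs
    · have : v = xv i := by
        funext p
        obtain ⟨l, b⟩ := p
        by_cases hl : l = i
        · subst hl
          cases b
          · rw [hs]; simp
          · rw [hq]; simp [Prod.ext_iff]
        · rw [xv_zero_ne i (l, b) hl]
          cases b
          · exact (hempty l hl).1
          · exact (hempty l hl).2
      rw [this]; exact reach_refl _
    · refine ⟨Jp i, Jp_mem_HH i, Jp_stab i, ?_⟩
      rw [Jp_apply]
      funext p
      obtain ⟨l, b⟩ := p
      by_cases hl : l = i
      · subst hl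
        cases b
        · simp only [if_pos rfl, hs]; simp
        · simp only [if_pos rfl, hq]; simp [Prod.ext_iff]
      · simp only [hl, if_false]
        cases b
        · rw [(hempty l hl).1, xv_zero_ne i (l, false) hl]
        · rw [(hempty l hl).2, xv_zero_ne i (l, true) hl]
  | succ n ih =>
    intro v hcard hunit hq heven hzb
    set S := Finset.univ.filter
      (fun j : Fin g => j ≠ i ∧ (v (j, false) ≠ 0 ∨ v (j, true) ≠ 0)) with hS
    by_cases hSe : S = ∅
    · exact ih v (by rw [← hS, hSe]; simp) hunit hq heven hzb
    · obtain ⟨j, hjS⟩ := Finset.nonempty_of_ne_empty hSe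
      rw [hS, Finset.mem_filter] at hjS
      obtain ⟨-, hji, hjnz⟩ := hjS
      have hij : i ≠ j := Ne.symm hji
      have hjge : (i : ℕ) ≤ (j : ℕ) := by
        by_contra hlt
        have h1 := hzb (j, false) (show ((j : ℕ)) < (i : ℕ) by omega)
        have h2 := hzb (j, true) (show ((j : ℕ)) < (i : ℕ) by omega)
        tauto
      set s := v (i, false) with hs'
      -- (a) clear qj with two moves
      obtain ⟨c, hc⟩ := heven (j, true) hji
      set k1 := -(c * s) with hk1'
      have hm1 := reach_move (i := (i : ℕ)) (yv i + yv j) (good_yy hij)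
        (supp_at2 i j hjge _ (by
          intro p hp1 hp2
          rw [coord_add, yv_zero_ne i p hp1, yv_zero_ne j p hp2]
          ring)) (-k1) v
      set v1 := v + (2 * -k1 * omg (yv i + yv j) v) • (yv i + yv j) with hv1
      have hco1 : omg (yv i + yv j) v = -v (i, false) - v (j, false) := by
        rw [omg_add_left, omg_yv, omg_yv]; ring
      have a1 : v1 (j, true) = v (j, true) + 2 * -k1 * (-v (i, false) - v (j, false)) := by
        rw [hv1, add_smul_apply, hco1, coord_add]
        simp [Prod.ext_iff, Ne.symm hij]
      have a2 : v1 (j, false) = v (j, false) := by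
        rw [hv1, add_smul_apply, coord_add]
        simp [Prod.ext_iff, Ne.symm hij]
      have a3 : v1 (i, false) = v (i, false) := by
        rw [hv1, add_smul_apply, coord_add]
        simp [Prod.ext_iff, hij]
      have a5 : ∀ p : Fin g × Bool, p.1 ≠ i → p.1 ≠ j → v1 p = v p := by
        intro p hp1 hp2
        rw [hv1, add_smul_apply, coord_add, yv_zero_ne i p hp1, yv_zero_ne j p hp2]
        ring
      have hm2 := reach_move (i := (i : ℕ)) (yv j) (good_yv j)
        (supp_at2 i j hjge _ (by intro p _ hp2; exact yv_zero_ne j p hp2)) k1 v1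
      set v2 := v1 + (2 * k1 * omg (yv j) v1) • yv j with hv2
      have hco2 : omg (yv j) v1 = -v (j, false) := by rw [omg_yv, a2]
      have hss : s * s = 1 := unit_sq hunit
      have b1 : v2 (j, true) = 0 := by
        rw [hv2, add_smul_apply, hco2, a1, yv_self, hk1', hc]
        linear_combination (-2 * c) * hss
      have b2 : v2 (j, false) = v (j, false) := by
        rw [hv2, add_smul_apply, a2]
        simp [Prod.ext_iff]
      have b3 : v2 (i, false) = v (i, false) := by
        rw [hv2, add_smul_apply, a3]
        simp [Prod.ext_iff, hij]
      have b4 : Even (v2 (i, true)) := by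
        rw [hv2, add_smul_apply, yv_zero_ne j (i, true) hij, mul_zero, add_zero, hv1,
          add_smul_apply, coord_add, hq]
        refine ⟨-k1 * omg (yv i + yv j) v, ?_⟩
        simp [Prod.ext_iff, hij]
        ring
      have b5 : ∀ p : Fin g × Bool, p.1 ≠ i → p.1 ≠ j → v2 p = v p := by
        intro p hp1 hp2
        rw [hv2, add_smul_apply, yv_zero_ne j p hp2, mul_zero, add_zero, a5 p hp1 hp2]
      -- rerun phase0
      obtain ⟨v3, hRe3, g1, g2, g3, -, g5⟩ :=
        phase0 i (v2 (i, true)).natAbs v2 le_rfl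
          (by
            rw [b3, ← hs']
            rcases hunit with h | h <;> rw [h]
            · exact ⟨0, by norm_num⟩
            · exact ⟨-1, by norm_num⟩) b4
      have hRe02 : Reach g (i : ℕ) v v2 := reach_trans hm1 hm2
      have hRe03 : Reach g (i : ℕ) v v3 := reach_trans hRe02 hRe3
      rw [b3, ← hs'] at g3
      have hunit3 : v3 (i, false) = 1 ∨ v3 (i, false) = -1 :=
        Int.isUnit_iff.1 (isUnit_of_dvd_unit g3 (Int.isUnit_iff.2 hunit))
      set s3 := v3 (i, false) with hs3'
      have hss3 : s3 * s3 = 1 := unit_sq hunit3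
      have c1 : v3 (j, true) = 0 := by rw [g5 (j, true) hji, b1]
      have c2 : v3 (j, false) = v (j, false) := by rw [g5 (j, false) hji, b2]
      have c5 : ∀ p : Fin g × Bool, p.1 ≠ i → p.1 ≠ j → v3 p = v p := by
        intro p hp1 hp2
        rw [g5 p hp1, b5 p hp1 hp2]
      -- (b) clear pj with one move
      obtain ⟨c', hc'⟩ := heven (j, false) hji
      set k2 := c' * s3 with hk2'
      have hm4 := reach_move (i := (i : ℕ)) (yv i + xv j) (good_yx i j)
        (supp_at2 i j hjge _ (by
          intro p hp1 hp2
          rw [coord_add, yv_zero_ne i p hp1, xv_zero_ne j p hp2]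
          ring)) k2 v3
      set v4 := v3 + (2 * k2 * omg (yv i + xv j) v3) • (yv i + xv j) with hv4
      have hco4 : omg (yv i + xv j) v3 = -s3 := by
        rw [omg_add_left, omg_yv, omg_xv, c1, ← hs3']
        ring
      have d1 : v4 (j, false) = 0 := by
        rw [hv4, add_smul_apply, hco4, c2, hc', hk2', coord_add]
        simp only [yv_zero_ne i (j, false) (Ne.symm hij), xv_self, zero_add]
        linear_combination (-2 * c') * hss3
      have d2 : v4 (j, true) = 0 := by
        rw [hv4, add_smul_apply, coord_add, yv_zero_ne i (j, true) (Ne.symm hij),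
          xv_at_true j j, c1]
        ring
      have d3 : v4 (i, false) = s3 := by
        rw [hv4, add_smul_apply, coord_add, yv_at_false i i,
          xv_zero_ne j (i, false) hij, ← hs3']
        ring
      have d4 : Even (v4 (i, true)) := by
        rw [hv4, add_smul_apply, hco4, coord_add, xv_zero_ne j (i, true) hij, g1]
        refine ⟨k2 * -s3 * yv i (i, true), ?_⟩
        ring
      have d5 : ∀ p : Fin g × Bool, p.1 ≠ i → p.1 ≠ j → v4 p = v p := by
        intro p hp1 hp2
        rw [hv4, add_smul_apply, coord_add, yv_zero_ne i p hp1, xv_zero_ne j p hp2,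
          c5 p hp1 hp2]
        ring
      -- rerun phase0
      obtain ⟨v5, hRe5, e1, e2, e3, -, e5⟩ :=
        phase0 i (v4 (i, true)).natAbs v4 le_rfl
          (by
            rw [d3]
            rcases hunit3 with h | h <;> rw [h]
            · exact ⟨0, by norm_num⟩
            · exact ⟨-1, by norm_num⟩) d4
      have hRe04 : Reach g (i : ℕ) v v4 := reach_trans hRe03 hm4
      have hRe05 : Reach g (i : ℕ) v v5 := reach_trans hRe04 hRe5
      rw [d3] at e3
      have hunit5 : v5 (i, false) = 1 ∨ v5 (i, false) = -1 :=
        Int.isUnit_iff.1 (isUnit_of_dvd_unit e3 (Int.isUnit_iff.2 hunit3))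
      have f1 : v5 (j, false) = 0 := by rw [e5 (j, false) hji, d1]
      have f2 : v5 (j, true) = 0 := by rw [e5 (j, true) hji, d2]
      have f5 : ∀ p : Fin g × Bool, p.1 ≠ i → p.1 ≠ j → v5 p = v p := by
        intro p hp1 hp2
        rw [e5 p hp1, d5 p hp1 hp2]
      -- card decreases
      have hsub : Finset.univ.filter
          (fun l : Fin g => l ≠ i ∧ (v5 (l, false) ≠ 0 ∨ v5 (l, true) ≠ 0)) ⊆ S.erase j := by
        intro l hl
        simp only [Finset.mem_filter, Finset.mem_univ, true_and] at hl
        obtain ⟨hli, hlnz⟩ := hl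
        have hlj : l ≠ j := by
          rintro rfl
          rw [f1, f2] at hlnz
          tauto
        rw [Finset.mem_erase]
        refine ⟨hlj, ?_⟩
        rw [hS, Finset.mem_filter]
        refine ⟨Finset.mem_univ l, hli, ?_⟩
        rw [← f5 (l, false) hli hlj, ← f5 (l, true) hli hlj]
        exact hlnz
      have hjmem : j ∈ S := by
        rw [hS, Finset.mem_filter]
        exact ⟨Finset.mem_univ j, hji, hjnz⟩
      have hcard5 : (Finset.univ.filter
          (fun l : Fin g => l ≠ i ∧ (v5 (l, false) ≠ 0 ∨ v5 (l, true) ≠ 0))).card ≤ n := by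
        have h1 := Finset.card_le_card hsub
        have h2 : (S.erase j).card = S.card - 1 := Finset.card_erase_of_mem hjmem
        have h3 : 1 ≤ S.card := Finset.card_pos.2 ⟨j, hjmem⟩
        omega
      exact reach_trans hRe05
        (ih v5 hcard5 hunit5 e1 (even_away_transfer hRe05 heven) (reach_zeroBelow hRe05 hzb))

end Phase23
section VWPhase
variable {g : ℕ}

lemma vphase (i : Fin g) (v : L g) (hodd : Odd (v (i, false))) (heventt : Even (v (i, true)))
    (heven : ∀ p : Fin g × Bool, p.1 ≠ i → Even (v p)) (hzb : ZeroBelow (i : ℕ) v)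
    (hgcd : UnitGcd v) : Reach g (i : ℕ) v (xv i) := by
  obtain ⟨v1, hRe1, a1, a2, -, -, -⟩ := phase0 i (v (i, true)).natAbs v le_rfl hodd heventt
  obtain ⟨v2, hRe2, b1, b2⟩ := phase1 i (v1 (i, false)).natAbs v1 le_rfl a2 a1
    (even_away_transfer hRe1 heven) (reach_zeroBelow hRe1 hzb) (reach_unitGcd hRe1 hgcd)
  have hRe12 : Reach g (i : ℕ) v v2 := reach_trans hRe1 hRe2
  have hRe3 := phase23 i (Finset.univ.filter
      (fun j : Fin g => j ≠ i ∧ (v2 (j, false) ≠ 0 ∨ v2 (j, true) ≠ 0))).card v2 le_rfl b1 b2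
    (even_away_transfer hRe12 heven) (reach_zeroBelow hRe12 hzb)
  exact reach_trans hRe12 hRe3

lemma wphase (i : Fin g) : ∀ (n : ℕ) (w : L g),
    (Finset.univ.filter (fun j : Fin g => j ≠ i ∧ (w (j, false) ≠ 0 ∨ w (j, true) ≠ 0))).card ≤ n →
    w (i, true) = 1 → Even (w (i, false)) →
    (∀ p : Fin g × Bool, p.1 ≠ i → Even (w p)) → ZeroBelow (i : ℕ) w →
    ReachX g i w (yv i) := by
  intro n
  induction n with
  | zero =>
    intro w hcard hq1 hp1 heven hzb
    have hempty : ∀ j : Fin g, j ≠ i → w (j, false) = 0 ∧ w (j, true) = 0 := by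
      intro j hj
      by_contra hcon
      have hmem : j ∈ Finset.univ.filter
          (fun j : Fin g => j ≠ i ∧ (w (j, false) ≠ 0 ∨ w (j, true) ≠ 0)) := by
        simp only [Finset.mem_filter, Finset.mem_univ, true_and]
        exact ⟨hj, by tauto⟩
      have := Finset.card_pos.2 ⟨j, hmem⟩
      omega
    obtain ⟨c, hc⟩ := hp1
    have hm := reachX_move (i := i) (xv i) (good_xv i)
      (supp_at i _ (xv_zero_ne i)) (xv_at_true i i) (-c) w
    set w1 := w + (2 * -c * omg (xv i) w) • xv i with hw1
    have key : w1 = yv i := by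
      funext p
      obtain ⟨l, b⟩ := p
      rw [hw1, add_smul_apply, omg_xv, hq1]
      by_cases hl : l = i
      · subst hl
        cases b
        · rw [hc, xv_self]
          simp [Prod.ext_iff]
          ring
        · rw [xv_at_true, hq1]
          simp [Prod.ext_iff]
      · rw [xv_zero_ne i (l, b) hl, mul_zero, add_zero, yv_zero_ne i (l, b) hl]
        cases b
        · exact (hempty l hl).1
        · exact (hempty l hl).2
    rw [key] at hm
    exact hm
  | succ n ih =>
    intro w hcard hq1 hp1 heven hzb
    set S := Finset.univ.filter
      (fun j : Fin g => j ≠ i ∧ (w (j, false) ≠ 0 ∨ w (j, true) ≠ 0)) with hS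
    by_cases hSe : S = ∅
    · exact ih w (by rw [← hS, hSe]; simp) hq1 hp1 heven hzb
    · obtain ⟨j, hjS⟩ := Finset.nonempty_of_ne_empty hSe
      rw [hS, Finset.mem_filter] at hjS
      obtain ⟨-, hji, hjnz⟩ := hjS
      have hij : i ≠ j := Ne.symm hji
      have hjge : (i : ℕ) ≤ (j : ℕ) := by
        by_contra hlt
        have h1 := hzb (j, false) (show ((j : ℕ)) < (i : ℕ) by omega)
        have h2 := hzb (j, true) (show ((j : ℕ)) < (i : ℕ) by omega)
        tauto
      obtain ⟨c, hc⟩ := heven (j, true) hji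
      obtain ⟨cp, hcp⟩ := heven (j, false) hji
      -- m1 : b = xv i + yv j, exponent -c
      have hsupp1 : ∀ l : Fin g, (l : ℕ) < (i : ℕ) →
          (xv i + yv j : L g) (l, false) = 0 ∧ (xv i + yv j : L g) (l, true) = 0 :=
        supp_at2 i j hjge _ (by
          intro p hp1' hp2
          rw [coord_add, xv_zero_ne i p hp1', yv_zero_ne j p hp2]
          ring)
      have hxt1 : (xv i + yv j : L g) (i, true) = 0 := by
        rw [coord_add, xv_at_true, yv_zero_ne j (i, true) hij]
        ring
      have hco1 : ∀ u : L g, u (i, true) = 1 → omg (xv i + yv j) u = 1 - u (j, false) := by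
        intro u hu
        rw [omg_add_left, omg_xv, omg_yv, hu]
        ring
      have hm1 := reachX_move (i := i) (xv i + yv j) (good_xy' i j) hsupp1 hxt1 (-c) w
      set w1 := w + (2 * -c * omg (xv i + yv j) w) • (xv i + yv j) with hw1
      have a0 : w1 (i, true) = 1 := by
        rw [hw1, add_smul_apply, hxt1, mul_zero, add_zero, hq1]
      have a1 : w1 (j, true) = w (j, true) + 2 * -c * (1 - w (j, false)) := by
        rw [hw1, add_smul_apply, hco1 w hq1, coord_add, xv_at_true]
        simp [Prod.ext_iff, Ne.symm hij]
      have a2 : w1 (j, false) = w (j, false) := by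
        rw [hw1, add_smul_apply, coord_add, xv_zero_ne i (j, false) (Ne.symm hij),
          yv_at_false j j]
        ring
      have a5 : ∀ p : Fin g × Bool, p.1 ≠ i → p.1 ≠ j → w1 p = w p := by
        intro p hpa hpb
        rw [hw1, add_smul_apply, coord_add, xv_zero_ne i p hpa, yv_zero_ne j p hpb]
        ring
      -- m2 : b = xv i + yv j, exponent -(c * cp)
      have hm2 := reachX_move (i := i) (xv i + yv j) (good_xy' i j) hsupp1 hxt1 (-(c * cp)) w1
      set w2 := w1 + (2 * -(c * cp) * omg (xv i + yv j) w1) • (xv i + yv j) with hw2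
      have b0 : w2 (i, true) = 1 := by
        rw [hw2, add_smul_apply, hxt1, mul_zero, add_zero, a0]
      have b1 : w2 (j, true) = w1 (j, true) + 2 * -(c * cp) * (1 - w (j, false)) := by
        rw [hw2, add_smul_apply, hco1 w1 a0, a2, coord_add, xv_at_true]
        simp [Prod.ext_iff, Ne.symm hij]
      have b2 : w2 (j, false) = w (j, false) := by
        rw [hw2, add_smul_apply, coord_add, xv_zero_ne i (j, false) (Ne.symm hij),
          yv_at_false j j, a2]
        ring
      have b5 : ∀ p : Fin g × Bool, p.1 ≠ i → p.1 ≠ j → w2 p = w p := by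
        intro p hpa hpb
        rw [hw2, add_smul_apply, coord_add, xv_zero_ne i p hpa, yv_zero_ne j p hpb,
          a5 p hpa hpb]
        ring
      -- m3 : b = xv i - yv j, exponent c * cp
      have hsupp3 : ∀ l : Fin g, (l : ℕ) < (i : ℕ) →
          (xv i - yv j : L g) (l, false) = 0 ∧ (xv i - yv j : L g) (l, true) = 0 :=
        supp_at2 i j hjge _ (by
          intro p hp1' hp2
          rw [coord_sub, xv_zero_ne i p hp1', yv_zero_ne j p hp2]
          ring)
      have hxt3 : (xv i - yv j : L g) (i, true) = 0 := by
        rw [coord_sub, xv_at_true, yv_zero_ne j (i, true) hij]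
        ring
      have hco3 : omg (xv i - yv j) w2 = 1 + w (j, false) := by
        rw [omg_sub_left, omg_xv, omg_yv, b0, b2]
        ring
      have hm3 := reachX_move (i := i) (xv i - yv j) (good_xsuby hij) hsupp3 hxt3 (c * cp) w2
      set w3 := w2 + (2 * (c * cp) * omg (xv i - yv j) w2) • (xv i - yv j) with hw3
      have c0 : w3 (i, true) = 1 := by
        rw [hw3, add_smul_apply, hxt3, mul_zero, add_zero, b0]
      have c1 : w3 (j, true) = 0 := by
        rw [hw3, add_smul_apply, hco3, coord_sub, xv_at_true, b1, a1, hc, hcp]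
        simp only [yv_self]
        ring
      have c2 : w3 (j, false) = w (j, false) := by
        rw [hw3, add_smul_apply, coord_sub, xv_zero_ne i (j, false) (Ne.symm hij),
          yv_at_false j j, b2]
        ring
      have c5 : ∀ p : Fin g × Bool, p.1 ≠ i → p.1 ≠ j → w3 p = w p := by
        intro p hpa hpb
        rw [hw3, add_smul_apply, coord_sub, xv_zero_ne i p hpa, yv_zero_ne j p hpb,
          b5 p hpa hpb]
        ring
      -- m4 : b = xv i + xv j, exponent -cp
      have hsupp4 : ∀ l : Fin g, (l : ℕ) < (i : ℕ) →
          (xv i + xv j : L g) (l, false) = 0 ∧ (xv i + xv j : L g) (l, true) = 0 :=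
        supp_at2 i j hjge _ (by
          intro p hp1' hp2
          rw [coord_add, xv_zero_ne i p hp1', xv_zero_ne j p hp2]
          ring)
      have hxt4 : (xv i + xv j : L g) (i, true) = 0 := by
        rw [coord_add, xv_at_true, xv_at_true]
        ring
      have hco4 : omg (xv i + xv j) w3 = 1 := by
        rw [omg_add_left, omg_xv, omg_xv, c0, c1]
        ring
      have hm4 := reachX_move (i := i) (xv i + xv j) (good_xx hij) hsupp4 hxt4 (-cp) w3
      set w4 := w3 + (2 * -cp * omg (xv i + xv j) w3) • (xv i + xv j) with hw4
      have d0 : w4 (i, true) = 1 := by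
        rw [hw4, add_smul_apply, hxt4, mul_zero, add_zero, c0]
      have d1 : w4 (j, false) = 0 := by
        rw [hw4, add_smul_apply, hco4, coord_add, xv_zero_ne i (j, false) (Ne.symm hij),
          xv_self, c2, hcp]
        ring
      have d2 : w4 (j, true) = 0 := by
        rw [hw4, add_smul_apply, coord_add, xv_at_true, xv_at_true, c1]
        ring
      have d5 : ∀ p : Fin g × Bool, p.1 ≠ i → p.1 ≠ j → w4 p = w p := by
        intro p hpa hpb
        rw [hw4, add_smul_apply, coord_add, xv_zero_ne i p hpa, xv_zero_ne j p hpb,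
          c5 p hpa hpb]
        ring
      -- recurse
      have hRe04 : ReachX g i w w4 :=
        reachX_trans (reachX_trans (reachX_trans hm1 hm2) hm3) hm4
      have hcard4 : (Finset.univ.filter
          (fun l : Fin g => l ≠ i ∧ (w4 (l, false) ≠ 0 ∨ w4 (l, true) ≠ 0))).card ≤ n := by
        have hsub : Finset.univ.filter
            (fun l : Fin g => l ≠ i ∧ (w4 (l, false) ≠ 0 ∨ w4 (l, true) ≠ 0)) ⊆ S.erase j := by
          intro l hl
          simp only [Finset.mem_filter, Finset.mem_univ, true_and] at hl
          obtain ⟨hli, hlnz⟩ := hl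
          have hlj : l ≠ j := by
            rintro rfl
            rw [d1, d2] at hlnz
            tauto
          rw [Finset.mem_erase]
          refine ⟨hlj, ?_⟩
          rw [hS, Finset.mem_filter]
          refine ⟨Finset.mem_univ l, hli, ?_⟩
          rw [← d5 (l, false) hli hlj, ← d5 (l, true) hli hlj]
          exact hlnz
        have hjmem : j ∈ S := by
          rw [hS, Finset.mem_filter]
          exact ⟨Finset.mem_univ j, hji, hjnz⟩
        have h1 := Finset.card_le_card hsub
        have h2 : (S.erase j).card = S.card - 1 := Finset.card_erase_of_mem hjmem
        have h3 : 1 ≤ S.card := Finset.card_pos.2 ⟨j, hjmem⟩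
        omega
      have hp14 : Even (w4 (i, false)) := by
        obtain ⟨t, ht⟩ := hp1
        obtain ⟨e, he⟩ := reach_parity (reachX_to_reach hRe04) (i, false)
        exact ⟨t + e, by omega⟩
      have heven4 : ∀ p : Fin g × Bool, p.1 ≠ i → Even (w4 p) :=
        even_away_transfer (reachX_to_reach hRe04) heven
      have hzb4 : ZeroBelow (i : ℕ) w4 := reach_zeroBelow (reachX_to_reach hRe04) hzb
      exact reachX_trans hRe04 (ih w4 hcard4 d0 hp14 heven4 hzb4)

end VWPhase
section Main
variable {g : ℕ}

/-- standard basis -/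
def ebas (p : Fin g × Bool) : L g := fun q => if q = p then 1 else 0

lemma ebas_false (j : Fin g) : ebas (j, false) = xv j := rfl
lemma ebas_true (j : Fin g) : ebas (j, true) = yv j := rfl

lemma rep_sum (v : L g) : v = ∑ p : Fin g × Bool, v p • ebas p := by
  funext q
  rw [Finset.sum_apply]
  have : ∀ p : Fin g × Bool, (v p • ebas p) q = if q = p then v p else 0 := by
    intro p
    simp only [Pi.smul_apply, smul_eq_mul, ebas]
    by_cases h : q = p <;> simp [h]
  rw [Finset.sum_congr rfl (fun p _ => this p)]
  rw [Finset.sum_ite_eq]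
  simp

lemma fix_all_eq_one (φ : L g ≃ₗ[ℤ] L g)
    (hfix : ∀ j : Fin g, φ (xv j) = xv j ∧ φ (yv j) = yv j) : φ = 1 := by
  apply LinearEquiv.ext
  intro v
  conv_lhs => rw [rep_sum v]
  rw [map_sum]
  simp only [map_smul]
  have : ∀ p : Fin g × Bool, φ (ebas p) = ebas p := by
    rintro ⟨j, b⟩
    cases b
    · rw [ebas_false]; exact (hfix j).1
    · rw [ebas_true]; exact (hfix j).2
  rw [Finset.sum_congr rfl (fun p _ => by rw [this p])]
  exact (rep_sum v).symm

lemma main_ind : ∀ (d i : ℕ), i + d = g → ∀ φ : L g ≃ₗ[ℤ] L g, φ ∈ SpTwo g →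
    (∀ j : Fin g, (j : ℕ) < i → φ (xv j) = xv j ∧ φ (yv j) = yv j) → φ ∈ HH g := by
  intro d
  induction d with
  | zero =>
    intro i hi φ hφ hfix
    have : φ = 1 := fix_all_eq_one φ (fun j => hfix j (by omega))
    rw [this]
    exact one_mem _
  | succ d ih =>
    intro i hi φ hφ hfix
    have hig : i < g := by omega
    set fi : Fin g := ⟨i, hig⟩ with hfi
    have hsp : φ ∈ Sp g := (Subgroup.mem_inf.1 hφ).1
    set v := φ (xv fi) with hv
    have hodd : Odd (v (fi, false)) := by
      obtain ⟨e, he⟩ := SpTwo_parity hφ (xv fi) (fi, false)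
      rw [xv_self] at he
      exact ⟨e, by rw [← hv] at he; omega⟩
    have heventt : Even (v (fi, true)) := by
      obtain ⟨e, he⟩ := SpTwo_parity hφ (xv fi) (fi, true)
      rw [xv_at_true] at he
      exact ⟨e, by rw [← hv] at he; omega⟩
    have heven : ∀ p : Fin g × Bool, p.1 ≠ fi → Even (v p) := by
      intro p hp
      obtain ⟨e, he⟩ := SpTwo_parity hφ (xv fi) p
      rw [xv_zero_ne fi p hp] at he
      exact ⟨e, by rw [← hv] at he; omega⟩
    have hzb : ZeroBelow (i : ℕ) v := by
      rintro ⟨j, b⟩ hj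
      have hjfi : j ≠ fi := by intro h; subst h; simp [hfi] at hj <;> omega
      cases b
      · have h1 : omg v (yv j) = v (j, false) := omg_right_yv v j
        have h2 : omg v (yv j) = 0 := by
          rw [hv, ← (hfix j hj).2, hsp (xv fi) (yv j), omg_right_yv,
            xv_zero_ne fi (j, false) hjfi]
        rw [h1] at h2
        exact h2
      · have h1 : omg v (xv j) = -v (j, true) := omg_right_xv v j
        have h2 : omg v (xv j) = 0 := by
          rw [hv, ← (hfix j hj).1, hsp (xv fi) (xv j), omg_right_xv,
            xv_zero_ne fi (j, true) hjfi]
          ring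
        rw [h1] at h2
        linarith
    have hgcd : UnitGcd v := by
      intro dd hdd
      have hu : v = dd • fun q => v q / dd := by
        funext q
        simp only [Pi.smul_apply, smul_eq_mul]
        exact (Int.mul_ediv_cancel' (hdd q)).symm
      have h2 : xv fi = dd • (φ⁻¹ fun q => v q / dd) := by
        have h3 := congrArg (fun u => φ⁻¹ u) hu
        simp only [map_smul] at h3
        rw [show φ⁻¹ v = xv fi from by rw [hv]; exact φ.symm_apply_apply (xv fi)] at h3
        exact h3
      have h4 := congrFun h2 (fi, false)
      rw [xv_self] at h4
      simp only [Pi.smul_apply, smul_eq_mul] at h4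
      exact IsUnit.of_mul_eq_one _ h4.symm
    obtain ⟨ψ, hψH, hψS, hψv⟩ := vphase fi v hodd heventt heven hzb hgcd
    set φ1 := ψ * φ with hφ1
    have hφ1Sp : φ1 ∈ SpTwo g := mul_mem (HH_le_SpTwo hψH) hφ
    have hφ1sp : φ1 ∈ Sp g := (Subgroup.mem_inf.1 hφ1Sp).1
    have hφ1fix : ∀ j : Fin g, (j : ℕ) < i → φ1 (xv j) = xv j ∧ φ1 (yv j) = yv j := by
      intro j hj
      constructor
      · rw [hφ1, mul_apply', (hfix j hj).1, (hψS j hj).1]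
      · rw [hφ1, mul_apply', (hfix j hj).2, (hψS j hj).2]
    have hφ1x : φ1 (xv fi) = xv fi := by
      rw [hφ1, mul_apply', ← hv, hψv]
    set w := φ1 (yv fi) with hw
    have hw1 : w (fi, true) = 1 := by
      have h1 : omg (xv fi) w = w (fi, true) := omg_xv fi w
      have h2 : omg (xv fi) w = 1 := by
        conv_lhs => rw [← hφ1x]
        rw [hw, hφ1sp (xv fi) (yv fi), omg_xv, yv_self]
      rw [h1] at h2
      exact h2
    have hwp1 : Even (w (fi, false)) := by
      obtain ⟨e, he⟩ := SpTwo_parity hφ1Sp (yv fi) (fi, false)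
      rw [yv_at_false] at he
      exact ⟨e, by rw [← hw] at he; omega⟩
    have hweven : ∀ p : Fin g × Bool, p.1 ≠ fi → Even (w p) := by
      intro p hp
      obtain ⟨e, he⟩ := SpTwo_parity hφ1Sp (yv fi) p
      rw [yv_zero_ne fi p hp] at he
      exact ⟨e, by rw [← hw] at he; omega⟩
    have hwzb : ZeroBelow (i : ℕ) w := by
      rintro ⟨j, b⟩ hj
      have hjfi : j ≠ fi := by intro h; subst h; simp [hfi] at hj <;> omega
      cases b
      · have h2 : omg w (yv j) = 0 := by
          rw [hw, ← (hφ1fix j hj).2, hφ1sp (yv fi) (yv j), omg_right_yv,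
            yv_at_false fi j]
        rw [omg_right_yv] at h2
        exact h2
      · have h2 : omg w (xv j) = 0 := by
          rw [hw, ← (hφ1fix j hj).1, hφ1sp (yv fi) (xv j), omg_right_xv,
            yv_zero_ne fi (j, true) hjfi]
          ring
        rw [omg_right_xv] at h2
        linarith
    obtain ⟨ψ', hψ'H, hψ'S, hψ'x, hψ'w⟩ := wphase fi (Finset.univ.filter
      (fun j : Fin g => j ≠ fi ∧ (w (j, false) ≠ 0 ∨ w (j, true) ≠ 0))).card w le_rfl
      hw1 hwp1 hweven hwzb
    set φ2 := ψ' * φ1 with hφ2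
    have hφ2Sp : φ2 ∈ SpTwo g := mul_mem (HH_le_SpTwo hψ'H) hφ1Sp
    have hφ2fix : ∀ j : Fin g, (j : ℕ) < i + 1 → φ2 (xv j) = xv j ∧ φ2 (yv j) = yv j := by
      intro j hj
      by_cases hji : (j : ℕ) < i
      · constructor
        · rw [hφ2, mul_apply', (hφ1fix j hji).1, (hψ'S j hji).1]
        · rw [hφ2, mul_apply', (hφ1fix j hji).2, (hψ'S j hji).2]
      · have hjfi : j = fi := by
          apply Fin.ext
          simp only [hfi]
          omega
        subst hjfi
        constructor
        · rw [hφ2, mul_apply', hφ1x, hψ'x]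
        · rw [hφ2, mul_apply', ← hw, hψ'w]
    have hmem2 : φ2 ∈ HH g := ih (i + 1) (by omega) φ2 hφ2Sp hφ2fix
    have : φ = ψ⁻¹ * (ψ'⁻¹ * φ2) := by
      rw [hφ2, hφ1]
      group
    rw [this]
    exact mul_mem (inv_mem hψH) (mul_mem (inv_mem hψ'H) hmem2)

end Main
/-- For `g ≥ 3`, `Sp^{(2)}(2g)` is generated by the square transvections `T_a²`
about the nonzero vectors `a` all of whose coordinates are `0` or `1`
(every such vector is primitive). -/
theorem statement4 (g : ℕ) (hg : 3 ≤ g) :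
    SpTwo g =
      Subgroup.closure {φ : L g ≃ₗ[ℤ] L g |
        ∃ a : L g, (∀ p, a p = 0 ∨ a p = 1) ∧ a ≠ 0 ∧ φ = (T a) ^ 2} := by
  have hEq : Subgroup.closure {φ : L g ≃ₗ[ℤ] L g |
      ∃ a : L g, (∀ p, a p = 0 ∨ a p = 1) ∧ a ≠ 0 ∧ φ = (T a) ^ 2} = HH g := rfl
  rw [hEq]
  apply le_antisymm
  · intro φ hφ
    exact main_ind g 0 (by omega) φ hφ (fun j hj => absurd hj (by omega))
  · exact HH_le_SpTwo

end Paper
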